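/- Let σ be a locally finite positive Borel measure on ℝ^n, f ≥ 0 a bounded measurable function with compact support, k ∈ ℤ, and Ω_k = { x : M(fσ)(x) > 2^k }. Let D be a shifted dyadic grid, R_W ≥ 3, and Q ∈ D a cube with 3R_W Q ∩ Ω_k^c ≠ ∅. Then the maximum principle holds: M^D(1_{Q^c} f σ)(x) ≤ 2(3R_W)^n · 2^k for every x ∈ Q. Consequently, if m ∈ ℕ satisfies 2^{m−1} ≥ 2(3R_W)^n, then every x ∈ Q with M^D(fσ)(x) > 2^{k+m} satisfies M^D(1_Q f σ)(x) > 2^{k+m−1}. -/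

import Mathlib

open MeasureTheory Set Filter
open scoped ENNReal NNReal

noncomputable section

/-- An axis-parallel half-open cube in `ℝⁿ`, given by its lower corner and (positive)
side length. -/
structure Cube (n : ℕ) where
  corner : Fin n → ℝ
  side : ℝ
  side_pos : 0 < side

namespace Cube

variable {n : ℕ}

/-- The underlying (half-open) set of the cube. -/
def toSet (Q : Cube n) : Set (Fin n → ℝ) :=
  {x | ∀ i, Q.corner i ≤ x i ∧ x i < Q.corner i + Q.side}

/-- The concentric dilate `ΓQ` of the cube `Q` (same center, side length `Γ·ℓ(Q)`),
as a set. -/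
def dilate (Q : Cube n) (Γ : ℝ) : Set (Fin n → ℝ) :=
  {x | ∀ i, Q.corner i - (Γ - 1) * Q.side / 2 ≤ x i ∧
       x i < Q.corner i + Q.side + (Γ - 1) * Q.side / 2}

/-- Membership in `𝒫ⁿ`: the side length is an integral power of `2`. -/
def memP (Q : Cube n) : Prop := ∃ ℓ : ℤ, Q.side = (2:ℝ) ^ ℓ

end Cube

/-- The translation applied at scale `2^ℓ` in the random dyadic grid determined by `β`:
`Σ_{j : 2^{-j} < 2^ℓ} 2^{-j} β_j`. -/
def gridShift {n : ℕ} (β : ℤ → Fin n → Bool) (ℓ : ℤ) (i : Fin n) : ℝ :=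
  ∑' j : ℤ, if (2:ℝ) ^ (-j) < (2:ℝ) ^ ℓ ∧ β j i = true then (2:ℝ) ^ (-j) else 0

/-- Membership in the shifted dyadic grid `𝒟^β`. -/
def memGrid {n : ℕ} (β : ℤ → Fin n → Bool) (Q : Cube n) : Prop :=
  ∃ (ℓ : ℤ) (k : Fin n → ℤ), Q.side = (2:ℝ) ^ ℓ ∧
    ∀ i, Q.corner i = (2:ℝ) ^ ℓ * (k i : ℝ) + gridShift β ℓ i

/-- The Hardy–Littlewood maximal function of a measure, over cubes in `𝒫ⁿ`. -/
def maximal {n : ℕ} (μ : Measure (Fin n → ℝ)) (x : Fin n → ℝ) : ℝ≥0∞ :=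
  ⨆ (Q : Cube n) (_ : Q.memP) (_ : x ∈ Q.toSet), μ Q.toSet / volume Q.toSet

/-- The dyadic maximal function relative to the grid `𝒟^β`. -/
def dyadicMaximal {n : ℕ} (β : ℤ → Fin n → Bool) (μ : Measure (Fin n → ℝ))
    (x : Fin n → ℝ) : ℝ≥0∞ :=
  ⨆ (Q : Cube n) (_ : memGrid β Q) (_ : x ∈ Q.toSet), μ Q.toSet / volume Q.toSet

/-- The two-weight Muckenhoupt constant `A₂(σ,ω)`. -/
def A2 {n : ℕ} (σ ω : Measure (Fin n → ℝ)) : ℝ≥0∞ :=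
  ⨆ (Q : Cube n) (_ : Q.memP), (σ Q.toSet / volume Q.toSet) * (ω Q.toSet / volume Q.toSet)

/-- The operator norm `𝔑_M(σ,ω)` of the maximal function from `L²(σ)` to `L²(ω)`:
the least `N` with `∫ M(fσ)² dω ≤ N² ∫ f² dσ` for all (nonnegative) `f`. -/
def opNorm {n : ℕ} (σ ω : Measure (Fin n → ℝ)) : ℝ≥0∞ :=
  sInf {N : ℝ≥0∞ | ∀ f : (Fin n → ℝ) → ℝ≥0∞, Measurable f →
    ∫⁻ x, (maximal (σ.withDensity f) x) ^ 2 ∂ω ≤ N ^ 2 * ∫⁻ x, (f x) ^ 2 ∂σ}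

/-!
Let `x ∈ Q` and let `Q'` be a grid cube through `x`. Cubes of a dyadic grid are nested or
disjoint, so either `Q' ⊆ Q`, and `1_{Qᶜ} fσ` vanishes on `Q'`, or `Q ⊆ Q'` with
`ℓ(Q') ≥ 2ℓ(Q)`. In the second case the point `z ∈ 3R_W Q` with `M(fσ)(z) ≤ 2^k` lies in
`((3R_W + 1)/2) Q'`, so some cube of `𝒫ⁿ` of side at most `(3R_W + 3)/2 · ℓ(Q') ≤ 3R_W ℓ(Q')`
contains both `Q'` and `z`; its average is at most `2^k`, and passing to `Q'` costs at most the
volume ratio `(3R_W)ⁿ`. The second claim follows from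
`M^𝒟(fσ) ≤ M^𝒟(1_Q fσ) + M^𝒟(1_{Qᶜ} fσ)`.
-/

namespace Cube

variable {n : ℕ}

theorem toSet_eq_pi (Q : Cube n) :
    Q.toSet = univ.pi fun i => Ico (Q.corner i) (Q.corner i + Q.side) := by
  ext x; simp [toSet, Set.mem_pi]

theorem measurableSet_toSet (Q : Cube n) : MeasurableSet Q.toSet := by
  rw [toSet_eq_pi]
  exact .univ_pi fun _ => measurableSet_Ico

theorem volume_toSet (Q : Cube n) : volume Q.toSet = ENNReal.ofReal (Q.side ^ n) := by
  simp [toSet_eq_pi, Real.volume_pi_Ico, ENNReal.ofReal_pow Q.side_pos.le]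

theorem corner_mem_toSet (Q : Cube n) : Q.corner ∈ Q.toSet :=
  fun _ => ⟨le_rfl, lt_add_of_pos_right _ Q.side_pos⟩

theorem toSet_subset_toSet_iff {Q Q' : Cube n} :
    Q.toSet ⊆ Q'.toSet ↔
      ∀ i, Q'.corner i ≤ Q.corner i ∧ Q.corner i + Q.side ≤ Q'.corner i + Q'.side := by
  have hne : Q.toSet ≠ ∅ := (nonempty_of_mem Q.corner_mem_toSet).ne_empty
  rw [toSet_eq_pi, toSet_eq_pi, pi_subset_pi_iff, ← toSet_eq_pi, or_iff_left hne]
  simp only [mem_univ, true_implies, Ico_subset_Ico_iff (lt_add_of_pos_right _ Q.side_pos)]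

theorem memP.two_mul_side_le {Q Q' : Cube n} (hQ : Q.memP) (hQ' : Q'.memP)
    (h : Q.side < Q'.side) : 2 * Q.side ≤ Q'.side := by
  obtain ⟨ℓ, hℓ⟩ := hQ
  obtain ⟨ℓ', hℓ'⟩ := hQ'
  rw [hℓ, hℓ', zpow_lt_zpow_iff_right₀ one_lt_two] at h
  rw [hℓ, hℓ', ← zpow_one_add₀ two_ne_zero, zpow_le_zpow_iff_right₀ one_lt_two]
  omega

theorem dilate_subset_dilate {Q Q' : Cube n} (hQQ' : Q.toSet ⊆ Q'.toSet)
    (hside : 2 * Q.side ≤ Q'.side) {Γ : ℝ} (hΓ : 1 ≤ Γ) :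
    Q.dilate Γ ⊆ Q'.dilate ((Γ + 1) / 2) := by
  intro z hz i
  have hc := toSet_subset_toSet_iff.1 hQQ' i
  have h := mul_le_mul_of_nonneg_left hside (sub_nonneg.2 hΓ)
  constructor <;> nlinarith [hz i]

theorem exists_memP_superset_of_mem_dilate (Q : Cube n) {Γ : ℝ} (hΓ : 1 ≤ Γ) {z : Fin n → ℝ}
    (hz : z ∈ Q.dilate Γ) :
    ∃ P : Cube n, P.memP ∧ Q.toSet ⊆ P.toSet ∧ z ∈ P.toSet ∧ P.side ≤ (Γ + 1) * Q.side := by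
  have hpos : 0 < (Γ + 1) * Q.side / 2 := by nlinarith [Q.side_pos]
  obtain ⟨ℓ, hℓ, hlo⟩ := exists_mem_Ico_zpow hpos one_lt_two
  have hhi : (2 : ℝ) ^ (ℓ + 1) ≤ (Γ + 1) * Q.side := by
    rw [zpow_add_one₀ two_ne_zero]
    linarith
  refine ⟨⟨fun i => min (z i) (Q.corner i), 2 ^ (ℓ + 1), zpow_pos two_pos _⟩, ⟨ℓ + 1, rfl⟩,
    toSet_subset_toSet_iff.2 fun i => ⟨min_le_right _ _, ?_⟩, fun i => ⟨min_le_left _ _, ?_⟩,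
    hhi⟩ <;>
  · dsimp only
    cases min_choice (z i) (Q.corner i) <;> nlinarith [hz i, Q.side_pos]

end Cube

section Grid

variable {n : ℕ} {β : ℤ → Fin n → Bool}

theorem memGrid.memP {Q : Cube n} (hQ : memGrid β Q) : Q.memP :=
  let ⟨ℓ, _, hℓ, _⟩ := hQ
  ⟨ℓ, hℓ⟩

theorem summable_gridShift_term (β : ℤ → Fin n → Bool) (ℓ : ℤ) (i : Fin n) :
    Summable fun j : ℤ => if (2:ℝ) ^ (-j) < 2 ^ ℓ ∧ β j i = true then (2:ℝ) ^ (-j) else 0 := by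
  refine summable_int_iff_summable_nat_and_neg.2 ⟨?_, ?_⟩
  · refine summable_geometric_two.of_nonneg_of_le (fun _ => by positivity) fun m => ?_
    split_ifs
    · simp
    · positivity
  · refine summable_of_ne_finset_zero (s := Finset.range ℓ.toNat) fun m hm => if_neg ?_
    rw [Finset.mem_range, not_lt] at hm
    rw [neg_neg, zpow_natCast, ← zpow_natCast, zpow_lt_zpow_iff_right₀ one_lt_two]
    omega

theorem gridShift_succ (β : ℤ → Fin n → Bool) (ℓ : ℤ) (i : Fin n) :
    gridShift β (ℓ + 1) i = gridShift β ℓ i + if β (-ℓ) i = true then 2 ^ ℓ else 0 := by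
  have hterm : ∀ j : ℤ,
      (if (2:ℝ) ^ (-j) < 2 ^ (ℓ + 1) ∧ β j i = true then (2:ℝ) ^ (-j) else 0)
        = (if (2:ℝ) ^ (-j) < 2 ^ ℓ ∧ β j i = true then (2:ℝ) ^ (-j) else 0)
          + if j = -ℓ then (if β (-ℓ) i = true then 2 ^ ℓ else 0) else 0 := by
    intro j
    simp only [zpow_lt_zpow_iff_right₀ (one_lt_two : (1 : ℝ) < 2)]
    rcases eq_or_ne j (-ℓ) with rfl | hj
    · simp
    · have hlt : -j < ℓ + 1 ↔ -j < ℓ := by omega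
      simp only [hlt, hj, if_false, add_zero]
  rw [gridShift, tsum_congr hterm,
    (summable_gridShift_term β ℓ i).tsum_add (hasSum_ite_eq (-ℓ) _).summable, tsum_ite_eq,
    gridShift]

theorem memGrid.exists_parent {Q : Cube n} (hQ : memGrid β Q) :
    ∃ Q' : Cube n, memGrid β Q' ∧ Q'.side = 2 * Q.side ∧ Q.toSet ⊆ Q'.toSet := by
  obtain ⟨ℓ, k, hside, hcorner⟩ := hQ
  obtain ⟨b, hb⟩ : ∃ b : Fin n → ℤ, ∀ i, b i = if β (-ℓ) i = true then 1 else 0 :=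
    ⟨_, fun _ => rfl⟩
  obtain ⟨k', hk'⟩ : ∃ k' : Fin n → ℤ, ∀ i, k' i = (k i - b i) / 2 := ⟨_, fun _ => rfl⟩
  refine ⟨⟨fun i => 2 ^ (ℓ + 1) * k' i + gridShift β (ℓ + 1) i, 2 ^ (ℓ + 1), zpow_pos two_pos _⟩,
    ⟨ℓ + 1, k', rfl, fun _ => rfl⟩, ?_, ?_⟩
  · change (2 : ℝ) ^ (ℓ + 1) = 2 * Q.side
    rw [hside, zpow_add_one₀ two_ne_zero, mul_comm]
  refine Cube.toSet_subset_toSet_iff.2 fun i => ?_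
  have hshift : (if β (-ℓ) i = true then (2:ℝ) ^ ℓ else 0) = 2 ^ ℓ * b i := by
    rw [hb i]
    split_ifs <;> simp
  have hk := hk' i
  -- the parent's corner is `Q.corner i` or `Q.corner i - 2 ^ ℓ`
  have h₁ : ((2 * k' i + b i : ℤ) : ℝ) ≤ k i := by exact_mod_cast (by omega : 2 * k' i + b i ≤ k i)
  have h₂ : (k i : ℝ) ≤ ((2 * k' i + b i : ℤ) : ℝ) + 1 := by
    exact_mod_cast (by omega : k i ≤ 2 * k' i + b i + 1)
  have hpos : (0 : ℝ) < 2 ^ ℓ := zpow_pos two_pos _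
  dsimp only
  rw [gridShift_succ, hshift, hcorner i, hside, zpow_add_one₀ two_ne_zero]
  push_cast at h₁ h₂
  constructor <;> nlinarith

theorem memGrid.eq_of_side_eq {Q Q' : Cube n} (hQ : memGrid β Q) (hQ' : memGrid β Q')
    (hs : Q.side = Q'.side) {x : Fin n → ℝ} (hx : x ∈ Q.toSet) (hx' : x ∈ Q'.toSet) :
    Q = Q' := by
  obtain ⟨ℓ, k, hside, hcorner⟩ := hQ
  obtain ⟨ℓ', k', hside', hcorner'⟩ := hQ'
  obtain rfl : ℓ = ℓ' :=
    zpow_right_injective₀ two_pos (by norm_num) (hside.symm.trans (hs.trans hside'))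
  have hpos : (0 : ℝ) < 2 ^ ℓ := zpow_pos two_pos _
  have hindex : ∀ i {a b : ℤ}, 2 ^ ℓ * a + gridShift β ℓ i ≤ x i →
      x i < 2 ^ ℓ * b + gridShift β ℓ i + 2 ^ ℓ → a ≤ b := by
    intro i a b ha hb
    have : (a : ℝ) < b + 1 := lt_of_mul_lt_mul_left (by linarith) hpos.le
    exact Int.lt_add_one_iff.1 (by exact_mod_cast this)
  have hcorner_eq : Q.corner = Q'.corner := funext fun i => by
    have h := hx i
    have h' := hx' i
    rw [hcorner i, hside] at h
    rw [hcorner' i, hside'] at h'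
    rw [hcorner i, hcorner' i, le_antisymm (hindex i h.1 h'.2) (hindex i h'.1 h.2)]
  cases Q
  cases Q'
  subst hs hcorner_eq
  rfl

theorem memGrid.toSet_subset_of_side_le {Q Q' : Cube n} (hQ : memGrid β Q) (hQ' : memGrid β Q')
    (hs : Q.side ≤ Q'.side) {x : Fin n → ℝ} (hx : x ∈ Q.toSet) (hx' : x ∈ Q'.toSet) :
    Q.toSet ⊆ Q'.toSet := by
  obtain ⟨d, hd⟩ : ∃ d : ℕ, Q'.side = 2 ^ d * Q.side := by
    obtain ⟨ℓ, -, hℓ, -⟩ := hQ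
    obtain ⟨ℓ', -, hℓ', -⟩ := hQ'
    rw [hℓ, hℓ', zpow_le_zpow_iff_right₀ one_lt_two] at hs
    obtain ⟨d, hd⟩ := Int.eq_ofNat_of_zero_le (sub_nonneg.2 hs)
    refine ⟨d, ?_⟩
    rw [hℓ, hℓ', ← zpow_natCast, ← zpow_add₀ two_ne_zero, ← hd, sub_add_cancel]
  clear hs
  induction d generalizing Q with
  | zero => rw [hQ.eq_of_side_eq hQ' (by simp [hd]) hx hx']
  | succ d ih =>
    obtain ⟨P, hP, hPside, hQP⟩ := hQ.exists_parent
    exact hQP.trans (ih hP (hQP hx) (by rw [hd, hPside, pow_succ]; ring))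

end Grid

section MaximalFunction

variable {n : ℕ} {β : ℤ → Fin n → Bool} {μ : Measure (Fin n → ℝ)}

theorem le_maximal {Q : Cube n} (hQ : Q.memP) {x : Fin n → ℝ} (hx : x ∈ Q.toSet) :
    μ Q.toSet / volume Q.toSet ≤ maximal μ x :=
  le_iSup₂_of_le Q hQ (le_iSup_of_le hx le_rfl)

theorem le_dyadicMaximal {Q : Cube n} (hQ : memGrid β Q) {x : Fin n → ℝ} (hx : x ∈ Q.toSet) :
    μ Q.toSet / volume Q.toSet ≤ dyadicMaximal β μ x :=
  le_iSup₂_of_le Q hQ (le_iSup_of_le hx le_rfl)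

theorem dyadicMaximal_le_restrict_add_restrict_compl {S : Set (Fin n → ℝ)} (hS : MeasurableSet S)
    (x : Fin n → ℝ) :
    dyadicMaximal β μ x ≤ dyadicMaximal β (μ.restrict S) x + dyadicMaximal β (μ.restrict Sᶜ) x := by
  refine iSup₂_le fun Q hQ => iSup_le fun hx => ?_
  have hsplit : μ Q.toSet = μ.restrict S Q.toSet + μ.restrict Sᶜ Q.toSet := by
    rw [← Measure.add_apply, μ.restrict_add_restrict_compl hS]
  rw [hsplit, ← ENNReal.div_add_div_same]
  exact add_le_add (le_dyadicMaximal hQ hx) (le_dyadicMaximal hQ hx)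

theorem lt_dyadicMaximal_restrict {S : Set (Fin n → ℝ)} (hS : MeasurableSet S) {x : Fin n → ℝ}
    {c : ℝ≥0∞} (hc : dyadicMaximal β (μ.restrict Sᶜ) x ≤ c) (h : 2 * c < dyadicMaximal β μ x) :
    c < dyadicMaximal β (μ.restrict S) x := by
  by_contra! hle
  refine h.not_ge ((dyadicMaximal_le_restrict_add_restrict_compl hS x).trans ?_)
  rw [two_mul]
  exact add_le_add hle hc

theorem average_le_of_subset_memP {Q P : Cube n} (hP : P.memP) (hQP : Q.toSet ⊆ P.toSet)
    {z : Fin n → ℝ} (hz : z ∈ P.toSet) :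
    μ Q.toSet / volume Q.toSet ≤ ENNReal.ofReal ((P.side / Q.side) ^ n) * maximal μ z := by
  have hvol : volume P.toSet ≠ 0 := by
    simp [Cube.volume_toSet, pow_pos P.side_pos]
  have hμP : μ P.toSet ≤ maximal μ z * volume P.toSet :=
    (ENNReal.div_le_iff hvol (by simp [Cube.volume_toSet])).1 (le_maximal hP hz)
  calc μ Q.toSet / volume Q.toSet
      ≤ maximal μ z * volume P.toSet / volume Q.toSet := by
        gcongr
        exact (measure_mono hQP).trans hμP
    _ = ENNReal.ofReal ((P.side / Q.side) ^ n) * maximal μ z := by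
      rw [mul_div_assoc, mul_comm, Cube.volume_toSet, Cube.volume_toSet,
        ← ENNReal.ofReal_div_of_pos (pow_pos Q.side_pos n), div_pow]

theorem dyadicMaximal_restrict_compl_le {Q : Cube n} (hQ : memGrid β Q) {Γ : ℝ} (hΓ : 1 ≤ Γ)
    {z : Fin n → ℝ} (hz : z ∈ Q.dilate Γ) {x : Fin n → ℝ} (hx : x ∈ Q.toSet) :
    dyadicMaximal β (μ.restrict Q.toSetᶜ) x ≤ ENNReal.ofReal (((Γ + 3) / 2) ^ n) * maximal μ z := by
  refine iSup₂_le fun Q' hQ' => iSup_le fun hx' => ?_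
  rcases le_or_gt Q'.side Q.side with hle | hlt
  · have hQ'Q : Q'.toSet ⊆ Q.toSet := hQ'.toSet_subset_of_side_le hQ hle hx' hx
    rw [Measure.restrict_apply Q'.measurableSet_toSet,
      ← sdiff_eq, sdiff_eq_empty.2 hQ'Q, measure_empty, ENNReal.zero_div]
    exact zero_le
  have hQQ' : Q.toSet ⊆ Q'.toSet := hQ.toSet_subset_of_side_le hQ' hlt.le hx hx'
  have h2 : 2 * Q.side ≤ Q'.side := hQ.memP.two_mul_side_le hQ'.memP hlt
  have hΓ' : 1 ≤ (Γ + 1) / 2 := by linarith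
  obtain ⟨P, hP, hQ'P, hzP, hPside⟩ :=
    Q'.exists_memP_superset_of_mem_dilate hΓ' (Q.dilate_subset_dilate hQQ' h2 hΓ hz)
  have hratio : P.side / Q'.side ≤ (Γ + 3) / 2 := by
    rw [div_le_iff₀ Q'.side_pos]
    linarith
  calc (μ.restrict Q.toSetᶜ) Q'.toSet / volume Q'.toSet
      ≤ μ Q'.toSet / volume Q'.toSet := by gcongr; exact Measure.restrict_le_self
    _ ≤ ENNReal.ofReal ((P.side / Q'.side) ^ n) * maximal μ z :=
      average_le_of_subset_memP hP hQ'P hzP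
    _ ≤ ENNReal.ofReal (((Γ + 3) / 2) ^ n) * maximal μ z := by
      gcongr
      exact div_nonneg P.side_pos.le Q'.side_pos.le

end MaximalFunction

theorem dyadic_maximum_principle_general
    {n : ℕ} (σ : Measure (Fin n → ℝ))
    (f : (Fin n → ℝ) → ℝ≥0∞)
    (k : ℤ) (β : ℤ → Fin n → Bool) (R_W : ℝ) (hRW : 3 ≤ R_W)
    (Q : Cube n) (hQ : memGrid β Q)
    (hout : (Q.dilate (3 * R_W) ∩
      {x | (2 : ℝ≥0∞) ^ k < maximal (σ.withDensity f) x}ᶜ).Nonempty) :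
    (∀ x ∈ Q.toSet,
      dyadicMaximal β ((σ.withDensity f).restrict Q.toSetᶜ) x
        ≤ ENNReal.ofReal (2 * (3 * R_W) ^ n) * (2 : ℝ≥0∞) ^ k) ∧
    (∀ m : ℕ, ENNReal.ofReal (2 * (3 * R_W) ^ n) ≤ (2 : ℝ≥0∞) ^ ((m : ℤ) - 1) →
      ∀ x ∈ Q.toSet,
        (2 : ℝ≥0∞) ^ (k + (m : ℤ)) < dyadicMaximal β (σ.withDensity f) x →
        (2 : ℝ≥0∞) ^ (k + (m : ℤ) - 1) <
          dyadicMaximal β ((σ.withDensity f).restrict Q.toSet) x) := by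
  obtain ⟨z, hzQ, hz⟩ := hout
  replace hz : maximal (σ.withDensity f) z ≤ 2 ^ k := not_lt.1 hz
  have hconst : ENNReal.ofReal (((3 * R_W + 3) / 2) ^ n) ≤ ENNReal.ofReal (2 * (3 * R_W) ^ n) := by
    refine ENNReal.ofReal_le_ofReal ((pow_le_pow_left₀ (by linarith)
      (show (3 * R_W + 3) / 2 ≤ 3 * R_W by linarith) n).trans ?_)
    linarith [pow_nonneg (by linarith : (0 : ℝ) ≤ 3 * R_W) n]
  have hfar : ∀ x ∈ Q.toSet, dyadicMaximal β ((σ.withDensity f).restrict Q.toSetᶜ) x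
      ≤ ENNReal.ofReal (2 * (3 * R_W) ^ n) * 2 ^ k := fun x hx =>
    (dyadicMaximal_restrict_compl_le hQ (by linarith) hzQ hx).trans (mul_le_mul' hconst hz)
  refine ⟨hfar, fun m hm x hx hlt => lt_dyadicMaximal_restrict Q.measurableSet_toSet
    ((hfar x hx).trans ?_) ?_⟩
  · calc ENNReal.ofReal (2 * (3 * R_W) ^ n) * 2 ^ k
        ≤ 2 ^ ((m : ℤ) - 1) * 2 ^ k := by gcongr
      _ = 2 ^ (k + m - 1) := by
        rw [← ENNReal.zpow_add two_ne_zero ENNReal.ofNat_ne_top, sub_add_eq_add_sub, add_comm]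
  · calc 2 * 2 ^ (k + m - 1) = (2 : ℝ≥0∞) ^ (1 + (k + m - 1)) := by
          rw [ENNReal.zpow_add two_ne_zero ENNReal.ofNat_ne_top, zpow_one]
      _ = 2 ^ (k + m) := by rw [add_sub_cancel]
      _ < dyadicMaximal β (σ.withDensity f) x := hlt

/-- **Maximum principle for the dyadic maximal function.**
If `σ` is locally finite, `f ≥ 0` is bounded, measurable, compactly supported,
`Ω_k = {M(fσ) > 2^k}`, `𝒟^β` is a shifted dyadic grid, `R_W ≥ 3`, and `Q ∈ 𝒟^β` is a
cube with `3R_W Q ∩ Ω_kᶜ ≠ ∅`, then `M^𝒟(1_{Qᶜ} fσ)(x) ≤ 2(3R_W)ⁿ · 2^k` on `Q`.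
Consequently, if `2^{m−1} ≥ 2(3R_W)ⁿ` then every `x ∈ Q` with `M^𝒟(fσ)(x) > 2^{k+m}`
satisfies `M^𝒟(1_Q fσ)(x) > 2^{k+m−1}`. -/
theorem dyadic_maximum_principle
    {n : ℕ} (σ : Measure (Fin n → ℝ)) (hσ : IsLocallyFiniteMeasure σ)
    (f : (Fin n → ℝ) → ℝ≥0∞) (hf : Measurable f)
    (C : ℝ≥0) (hbdd : ∀ x, f x ≤ (C : ℝ≥0∞))
    (hsupp : ∃ K : Set (Fin n → ℝ), IsCompact K ∧ ∀ x ∉ K, f x = 0)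
    (k : ℤ) (β : ℤ → Fin n → Bool) (R_W : ℝ) (hRW : 3 ≤ R_W)
    (Q : Cube n) (hQ : memGrid β Q)
    (hout : (Q.dilate (3 * R_W) ∩
      {x | (2 : ℝ≥0∞) ^ k < maximal (σ.withDensity f) x}ᶜ).Nonempty) :
    (∀ x ∈ Q.toSet,
      dyadicMaximal β ((σ.withDensity f).restrict Q.toSetᶜ) x
        ≤ ENNReal.ofReal (2 * (3 * R_W) ^ n) * (2 : ℝ≥0∞) ^ k) ∧
    (∀ m : ℕ, ENNReal.ofReal (2 * (3 * R_W) ^ n) ≤ (2 : ℝ≥0∞) ^ ((m : ℤ) - 1) →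
      ∀ x ∈ Q.toSet,
        (2 : ℝ≥0∞) ^ (k + (m : ℤ)) < dyadicMaximal β (σ.withDensity f) x →
        (2 : ℝ≥0∞) ^ (k + (m : ℤ) - 1) <
          dyadicMaximal β ((σ.withDensity f).restrict Q.toSet) x) :=
  dyadic_maximum_principle_general σ f k β R_W hRW Q hQ hout
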